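/- Let F be a finitely generated free group, let m ≥ 1, set Q = F/γ_{m+1}(F), and let Z = γ_m(Q) = γ_m(F)/γ_{m+1}(F), which is a central subgroup of Q. Let H = F/γ_1(F) be the abelianization of F (note the abelianization of Q is also H, since m ≥ 1). For every group homomorphism d : H → Z, the map θ_d : Q → Q defined by θ_d(x) = x · d([x]), where [x] ∈ H is the image of x, is an automorphism of Q that induces the identity automorphism on F/γ_m(F); moreover d ↦ θ_d is an injective group homomorphism from the additive group Hom(H, Z) into Aut(Q). -/

import Mathlib

/-!
The lower central series commutes with surjective homomorphisms, so `γ_m(Q)` is the image of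
`γ_m(F)`, `γ_{m+1}(Q) = 1`, and hence `Z = γ_m(Q)` is central. The same fact shows that `Z` is
killed by both projections `Q → H` and `Q → F ⧸ γ_m(F)` (the first because `m ≥ 1`). Centrality
makes `x ↦ x * d (pr x)` multiplicative, and `pr ∘ d = 1` makes `x ↦ x * (d (pr x))⁻¹` its inverse
and gives the composition law. Injectivity of `d ↦ θ_d` is surjectivity of `pr`.
-/

namespace Subgroup

variable {G K : Type*} [Group G] [Group K]

theorem map_top_lowerCentralSeries_of_surjective {f : G →* K} (hf : Function.Surjective f)
    (n : ℕ) :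
    ((⊤ : Subgroup G).lowerCentralSeries n).map f = (⊤ : Subgroup K).lowerCentralSeries n := by
  rw [map_lowerCentralSeries, map_top_of_surjective f hf]

theorem lowerCentralSeries_quotient_lowerCentralSeries_eq_bot {k n : ℕ} (hkn : k ≤ n) :
    (⊤ : Subgroup (G ⧸ (⊤ : Subgroup G).lowerCentralSeries k)).lowerCentralSeries n = ⊥ := by
  refine eq_bot_iff.mpr <| (lowerCentralSeries_antitone _ hkn).trans (le_of_eq ?_)
  rw [← map_top_lowerCentralSeries_of_surjective (QuotientGroup.mk'_surjective _),
    map_eq_bot_iff, QuotientGroup.ker_mk']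

theorem lowerCentralSeries_le_ker (f : G →* K) {n : ℕ}
    (hK : (⊤ : Subgroup K).lowerCentralSeries n = ⊥) :
    (⊤ : Subgroup G).lowerCentralSeries n ≤ f.ker := by
  rw [← map_eq_bot_iff, map_lowerCentralSeries, eq_bot_iff, ← hK]
  exact lowerCentralSeries_mono n le_top

end Subgroup

section CentralTwist

open Subgroup

variable {Q H : Type*} [Group Q] [Group H] (p : Q →* H) {d d' : H →* Q}

def centralTwist (hd : ∀ h, d h ∈ center Q) (hpd : ∀ h, p (d h) = 1) : Q ≃* Q where
  toFun x := x * d (p x)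
  invFun x := x * (d (p x))⁻¹
  left_inv x := by simp [hpd]
  right_inv x := by simp [hpd]
  map_mul' x y := by
    simp only [map_mul, mul_assoc, mul_right_inj]
    rw [← mul_assoc, mem_center_iff.mp (hd (p x)) y, mul_assoc]

@[simp]
theorem centralTwist_apply (hd : ∀ h, d h ∈ center Q) (hpd : ∀ h, p (d h) = 1) (x : Q) :
    centralTwist p hd hpd x = x * d (p x) :=
  rfl

theorem centralTwist_apply_centralTwist (hd : ∀ h, d h ∈ center Q) (hpd : ∀ h, p (d h) = 1)
    (hd' : ∀ h, d' h ∈ center Q) (hpd' : ∀ h, p (d' h) = 1) (x : Q) :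
    centralTwist p hd hpd (centralTwist p hd' hpd' x) = x * (d (p x) * d' (p x)) := by
  rw [centralTwist_apply, centralTwist_apply, map_mul, hpd', mul_one, mul_assoc,
    mem_center_iff.mp (hd (p x))]

end CentralTwist

theorem statement6_general {α : Type*} (m : ℕ) (hm : 1 ≤ m)
    (pr : (FreeGroup α ⧸ (⊤ : Subgroup (FreeGroup α)).lowerCentralSeries (m + 1)) →*
          (FreeGroup α ⧸ (⊤ : Subgroup (FreeGroup α)).lowerCentralSeries 1))
    (hpr : ∀ x : FreeGroup α, pr (QuotientGroup.mk x) = QuotientGroup.mk x)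
    (π : (FreeGroup α ⧸ (⊤ : Subgroup (FreeGroup α)).lowerCentralSeries (m + 1)) →*
         (FreeGroup α ⧸ (⊤ : Subgroup (FreeGroup α)).lowerCentralSeries m)) :
    -- Z = γ_m(Q) is central in Q ...
    ((⊤ : Subgroup (FreeGroup α ⧸ (⊤ : Subgroup (FreeGroup α)).lowerCentralSeries (m + 1))).lowerCentralSeries m ≤
        Subgroup.center (FreeGroup α ⧸ (⊤ : Subgroup (FreeGroup α)).lowerCentralSeries (m + 1))) ∧
    -- ... and equals γ_m(F)/γ_{m+1}(F), the image of γ_m(F) in Q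
    ((⊤ : Subgroup (FreeGroup α ⧸ (⊤ : Subgroup (FreeGroup α)).lowerCentralSeries (m + 1))).lowerCentralSeries m =
        Subgroup.map (QuotientGroup.mk' ((⊤ : Subgroup (FreeGroup α)).lowerCentralSeries (m + 1)))
          ((⊤ : Subgroup (FreeGroup α)).lowerCentralSeries m)) ∧
    -- for every d : H → Z, θ_d : x ↦ x * d (pr x) is an automorphism of Q
    -- inducing the identity on F ⧸ γ_m(F) ...
    (∀ d : (FreeGroup α ⧸ (⊤ : Subgroup (FreeGroup α)).lowerCentralSeries 1) →*
           (FreeGroup α ⧸ (⊤ : Subgroup (FreeGroup α)).lowerCentralSeries (m + 1)),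
      (∀ h, d h ∈
          (⊤ : Subgroup (FreeGroup α ⧸ (⊤ : Subgroup (FreeGroup α)).lowerCentralSeries (m + 1))).lowerCentralSeries m) →
      (Function.Bijective fun x => x * d (pr x)) ∧
      (∀ x y, (x * y) * d (pr (x * y)) = (x * d (pr x)) * (y * d (pr y))) ∧
      (∀ x, π (x * d (pr x)) = π x)) ∧
    -- ... and d ↦ θ_d is a group homomorphism: θ_d ∘ θ_{d'} = θ_{d·d'} ...
    (∀ d d' : (FreeGroup α ⧸ (⊤ : Subgroup (FreeGroup α)).lowerCentralSeries 1) →*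
           (FreeGroup α ⧸ (⊤ : Subgroup (FreeGroup α)).lowerCentralSeries (m + 1)),
      (∀ h, d h ∈
          (⊤ : Subgroup (FreeGroup α ⧸ (⊤ : Subgroup (FreeGroup α)).lowerCentralSeries (m + 1))).lowerCentralSeries m) →
      (∀ h, d' h ∈
          (⊤ : Subgroup (FreeGroup α ⧸ (⊤ : Subgroup (FreeGroup α)).lowerCentralSeries (m + 1))).lowerCentralSeries m) →
      ∀ x, (x * d' (pr x)) * d (pr (x * d' (pr x))) = x * (d (pr x) * d' (pr x))) ∧
    -- ... which is injective.
    (∀ d : (FreeGroup α ⧸ (⊤ : Subgroup (FreeGroup α)).lowerCentralSeries 1) →*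
           (FreeGroup α ⧸ (⊤ : Subgroup (FreeGroup α)).lowerCentralSeries (m + 1)),
      (∀ h, d h ∈
          (⊤ : Subgroup (FreeGroup α ⧸ (⊤ : Subgroup (FreeGroup α)).lowerCentralSeries (m + 1))).lowerCentralSeries m) →
      (∀ x, x * d (pr x) = x) → ∀ h, d h = 1) := by
  have hZ_center := Subgroup.commutator_top_right_eq_bot_iff_le_center.mp
    (Subgroup.lowerCentralSeries_quotient_lowerCentralSeries_eq_bot (G := FreeGroup α)
      (le_refl (m + 1)))
  have hZ_ker_pr := Subgroup.lowerCentralSeries_le_ker pr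
    (Subgroup.lowerCentralSeries_quotient_lowerCentralSeries_eq_bot hm)
  have hZ_ker_π := Subgroup.lowerCentralSeries_le_ker π
    (Subgroup.lowerCentralSeries_quotient_lowerCentralSeries_eq_bot le_rfl)
  have hpr_surj : Function.Surjective pr := fun h =>
    let ⟨x, hx⟩ := QuotientGroup.mk_surjective h
    ⟨x, (hpr x).trans hx⟩
  refine ⟨hZ_center, (Subgroup.map_top_lowerCentralSeries_of_surjective
    (QuotientGroup.mk'_surjective _) m).symm, fun d hd => ?_, fun d d' hd hd' => ?_,
    fun d hd hθ h => ?_⟩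
  · let θ_d := centralTwist pr (hZ_center <| hd ·) (hZ_ker_pr <| hd ·)
    refine ⟨θ_d.bijective, map_mul θ_d, fun x => ?_⟩
    rw [map_mul, π.mem_ker.mp (hZ_ker_π (hd _)), mul_one]
  · exact centralTwist_apply_centralTwist pr (hZ_center <| hd ·) (hZ_ker_pr <| hd ·)
      (hZ_center <| hd' ·) (hZ_ker_pr <| hd' ·)
  · obtain ⟨x, rfl⟩ := hpr_surj h
    exact mul_eq_left.mp (hθ x)

theorem statement6 {α : Type*} [Finite α] (m : ℕ) (hm : 1 ≤ m)
    (pr : (FreeGroup α ⧸ (⊤ : Subgroup (FreeGroup α)).lowerCentralSeries (m + 1)) →*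
          (FreeGroup α ⧸ (⊤ : Subgroup (FreeGroup α)).lowerCentralSeries 1))
    (hpr : ∀ x : FreeGroup α, pr (QuotientGroup.mk x) = QuotientGroup.mk x)
    (π : (FreeGroup α ⧸ (⊤ : Subgroup (FreeGroup α)).lowerCentralSeries (m + 1)) →*
         (FreeGroup α ⧸ (⊤ : Subgroup (FreeGroup α)).lowerCentralSeries m))
    (hπ : ∀ x : FreeGroup α, π (QuotientGroup.mk x) = QuotientGroup.mk x) :
    -- Z = γ_m(Q) is central in Q ...
    ((⊤ : Subgroup (FreeGroup α ⧸ (⊤ : Subgroup (FreeGroup α)).lowerCentralSeries (m + 1))).lowerCentralSeries m ≤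
        Subgroup.center (FreeGroup α ⧸ (⊤ : Subgroup (FreeGroup α)).lowerCentralSeries (m + 1))) ∧
    -- ... and equals γ_m(F)/γ_{m+1}(F), the image of γ_m(F) in Q
    ((⊤ : Subgroup (FreeGroup α ⧸ (⊤ : Subgroup (FreeGroup α)).lowerCentralSeries (m + 1))).lowerCentralSeries m =
        Subgroup.map (QuotientGroup.mk' ((⊤ : Subgroup (FreeGroup α)).lowerCentralSeries (m + 1)))
          ((⊤ : Subgroup (FreeGroup α)).lowerCentralSeries m)) ∧
    -- for every d : H → Z, θ_d : x ↦ x * d (pr x) is an automorphism of Q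
    -- inducing the identity on F ⧸ γ_m(F) ...
    (∀ d : (FreeGroup α ⧸ (⊤ : Subgroup (FreeGroup α)).lowerCentralSeries 1) →*
           (FreeGroup α ⧸ (⊤ : Subgroup (FreeGroup α)).lowerCentralSeries (m + 1)),
      (∀ h, d h ∈
          (⊤ : Subgroup (FreeGroup α ⧸ (⊤ : Subgroup (FreeGroup α)).lowerCentralSeries (m + 1))).lowerCentralSeries m) →
      (Function.Bijective fun x => x * d (pr x)) ∧
      (∀ x y, (x * y) * d (pr (x * y)) = (x * d (pr x)) * (y * d (pr y))) ∧
      (∀ x, π (x * d (pr x)) = π x)) ∧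
    -- ... and d ↦ θ_d is a group homomorphism: θ_d ∘ θ_{d'} = θ_{d·d'} ...
    (∀ d d' : (FreeGroup α ⧸ (⊤ : Subgroup (FreeGroup α)).lowerCentralSeries 1) →*
           (FreeGroup α ⧸ (⊤ : Subgroup (FreeGroup α)).lowerCentralSeries (m + 1)),
      (∀ h, d h ∈
          (⊤ : Subgroup (FreeGroup α ⧸ (⊤ : Subgroup (FreeGroup α)).lowerCentralSeries (m + 1))).lowerCentralSeries m) →
      (∀ h, d' h ∈
          (⊤ : Subgroup (FreeGroup α ⧸ (⊤ : Subgroup (FreeGroup α)).lowerCentralSeries (m + 1))).lowerCentralSeries m) →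
      ∀ x, (x * d' (pr x)) * d (pr (x * d' (pr x))) = x * (d (pr x) * d' (pr x))) ∧
    -- ... which is injective.
    (∀ d : (FreeGroup α ⧸ (⊤ : Subgroup (FreeGroup α)).lowerCentralSeries 1) →*
           (FreeGroup α ⧸ (⊤ : Subgroup (FreeGroup α)).lowerCentralSeries (m + 1)),
      (∀ h, d h ∈
          (⊤ : Subgroup (FreeGroup α ⧸ (⊤ : Subgroup (FreeGroup α)).lowerCentralSeries (m + 1))).lowerCentralSeries m) →
      (∀ x, x * d (pr x) = x) → ∀ h, d h = 1) :=
  statement6_general m hm pr hpr π
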